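/- arXiv:1609.00015 — 5 statements merged into one kernel-verified Lean document; each statement's English description precedes it below -/
import Mathlib

section
/- Let H be a finite-dimensional complex inner product space, let U, W, V be unitary operators on H, let {e_i} be an orthonormal eigenbasis of W with eigenvalues μ_i and {f_k} an orthonormal eigenbasis of V with eigenvalues ν_k, and let ρ be a density operator on H. Define F : ℝ × ℝ → ℂ by F(β, β') := Σ_{i₂,i₃,k₁,k₂} exp( −( β · conj(μ_{i₃}) · conj(ν_{k₂}) + β' · μ_{i₂} · ν_{k₁} ) ) · Ã_ρ(i₂,i₃,k₁,k₂), i.e. the average ⟨e^{−(βW + β'W')}⟩ of the random variables W := w₃* v₂* and W' := w₂ v₁ under the complex distribution P(W,W') built from the combined quantum amplitudes Ã_ρ. Then the mixed partial derivative ∂²F/∂β∂β' evaluated at β = β' = 0 equals the out-of-time-ordered correlator C := Tr(ρ ∘ W(t)† ∘ V† ∘ W(t) ∘ V), where W(t) := U† ∘ W ∘ U. (Jarzynski-like equality for the OTOC.) -/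
/-!
Differentiating under the finite sum, `∂β ∂β'` of `exp (-(β a + β' b))` at `0` is `a b`, so the
mixed derivative of `F` is the `Ã_ρ`-weighted sum of `conj μ_{i₃} conj ν_{k₂} μ_{i₂} ν_{k₁}`.
Expanding the trace in the eigenbasis `f` of `V`, and resolving `W(t) = U† W U` and
`W(t)† = U† W† U` through the eigenbasis `e` of `W` (on which `W†` acts by `conj μ`),
produces the same quadruple sum.
-/

open scoped InnerProductSpace
open ContinuousLinearMap

theorem deriv_sum_cexp_neg_mul_at_zero {ι : Type*} (s : Finset ι) (a c : ι → ℂ) :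
    deriv (fun t : ℝ => ∑ j ∈ s, Complex.exp (-(t * a j)) * c j) 0 = -∑ j ∈ s, a j * c j := by
  have hterm : ∀ j, HasDerivAt (fun t : ℝ => Complex.exp (-(t * a j)) * c j)
      (Complex.exp (-(((0 : ℝ) : ℂ) * a j)) * -(1 * a j) * c j) 0 := fun j =>
    ((((hasDerivAt_id ((0 : ℝ) : ℂ)).mul_const (a j)).neg.cexp).comp_ofReal).mul_const (c j)
  rw [(HasDerivAt.fun_sum fun j _ => hterm j).deriv]
  simp

theorem deriv_deriv_sum_cexp_neg_at_zero {ι : Type*} (s : Finset ι) (a b c : ι → ℂ) :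
    deriv (fun β : ℝ => deriv (fun β' : ℝ =>
      ∑ j ∈ s, Complex.exp (-(β * a j + β' * b j)) * c j) 0) 0 = ∑ j ∈ s, a j * b j * c j := by
  have hinner (β : ℝ) : deriv (fun β' : ℝ => ∑ j ∈ s, Complex.exp (-(β * a j + β' * b j)) * c j) 0
      = ∑ j ∈ s, Complex.exp (-(β * a j)) * -(b j * c j) := by
    have hsplit (β' : ℝ) : ∑ j ∈ s, Complex.exp (-(β * a j + β' * b j)) * c j
        = ∑ j ∈ s, Complex.exp (-(β' * b j)) * (Complex.exp (-(β * a j)) * c j) :=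
      Finset.sum_congr rfl fun j _ => by rw [neg_add, Complex.exp_add]; ring
    simp_rw [hsplit, deriv_sum_cexp_neg_mul_at_zero, ← Finset.sum_neg_distrib]
    exact Finset.sum_congr rfl fun j _ => by ring
  simp_rw [hinner, deriv_sum_cexp_neg_mul_at_zero, ← Finset.sum_neg_distrib]
  exact Finset.sum_congr rfl fun j _ => by ring

namespace OrthonormalBasis

variable {𝕜 E ι : Type*} [RCLike 𝕜] [NormedAddCommGroup E] [InnerProductSpace 𝕜 E] [Fintype ι]
  (b : OrthonormalBasis ι 𝕜 E) {T : E →L[𝕜] E} {ev : ι → 𝕜}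

theorem apply_eq_sum_of_eigenvectors (hT : ∀ i, T (b i) = ev i • b i) (x : E) :
    T x = ∑ i, (ev i * ⟪b i, x⟫_𝕜) • b i := by
  conv_lhs => rw [← b.sum_repr' x]
  simp [hT, smul_smul, mul_comm]

theorem adjoint_apply_of_eigenvectors [CompleteSpace E] (hT : ∀ i, T (b i) = ev i • b i) (i : ι) :
    adjoint T (b i) = (starRingEnd 𝕜) (ev i) • b i := by
  classical
  rw [← b.sum_repr' (adjoint T (b i))]
  simp [adjoint_inner_right, hT, inner_smul_left, orthonormal_iff_ite.mp b.orthonormal]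

end OrthonormalBasis

section OTOC

variable {𝕜 E I K : Type*} [RCLike 𝕜] [NormedAddCommGroup E] [InnerProductSpace 𝕜 E]
  [CompleteSpace E] [Fintype I] [Fintype K]

noncomputable def combinedAmplitude (U ρ : E →L[𝕜] E) (e : OrthonormalBasis I 𝕜 E)
    (f : OrthonormalBasis K 𝕜 E) (i₂ i₃ : I) (k₁ k₂ : K) : 𝕜 :=
  ⟪e i₃, U (f k₂)⟫_𝕜 * ⟪f k₂, adjoint U (e i₂)⟫_𝕜 *
    ⟪e i₂, U (f k₁)⟫_𝕜 * ⟪f k₁, ρ (adjoint U (e i₃))⟫_𝕜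

theorem trace_otoc_eq_sum_combinedAmplitude (U W V ρ : E →L[𝕜] E) (e : OrthonormalBasis I 𝕜 E)
    (f : OrthonormalBasis K 𝕜 E) {μ : I → 𝕜} {ν : K → 𝕜}
    (hWe : ∀ i, W (e i) = μ i • e i) (hVf : ∀ k, V (f k) = ν k • f k) :
    LinearMap.trace 𝕜 E ((ρ ∘L adjoint (adjoint U ∘L W ∘L U) ∘L adjoint V ∘L
        (adjoint U ∘L W ∘L U) ∘L V).toLinearMap)
      = ∑ i₂, ∑ i₃, ∑ k₁, ∑ k₂, (starRingEnd 𝕜) (μ i₃) * (starRingEnd 𝕜) (ν k₂) *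
          (μ i₂ * ν k₁) * combinedAmplitude U ρ e f i₂ i₃ k₁ k₂ := by
  have hW' := e.apply_eq_sum_of_eigenvectors (e.adjoint_apply_of_eigenvectors hWe)
  have hV' := f.apply_eq_sum_of_eigenvectors (f.adjoint_apply_of_eigenvectors hVf)
  have hW := e.apply_eq_sum_of_eigenvectors hWe
  rw [LinearMap.trace_eq_sum_inner _ f]
  simp only [adjoint_comp, adjoint_adjoint, comp_apply, coe_coe, hVf, hW, hW', hV',
    map_smul, map_sum, inner_sum, inner_smul_right, Finset.mul_sum, Finset.sum_mul]
  -- move every `I`-sum in front of the `K`-sums, then swap `i₃` and `i₂`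
  simp_rw [Finset.sum_comm (γ := K) (α := I)]
  rw [Finset.sum_comm]
  congr! 4 with i₂ - i₃ - k₁ - k₂ -
  unfold combinedAmplitude
  ring

end OTOC

theorem jarzynski_like_equality_for_OTOC_general
    {H : Type*} [NormedAddCommGroup H] [InnerProductSpace ℂ H] [FiniteDimensional ℂ H]
    {I K : Type*} [Fintype I] [Fintype K]
    (U W V ρ : H →L[ℂ] H)
    (e : OrthonormalBasis I ℂ H) (f : OrthonormalBasis K ℂ H)
    (μ : I → ℂ) (ν : K → ℂ)
    (hWe : ∀ i, W (e i) = μ i • e i)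
    (hVf : ∀ k, V (f k) = ν k • f k)
    (F : ℝ → ℝ → ℂ)
    (hF : ∀ β β' : ℝ,
      F β β' = ∑ i₂ : I, ∑ i₃ : I, ∑ k₁ : K, ∑ k₂ : K,
        Complex.exp (-((β : ℂ) * (starRingEnd ℂ) (μ i₃) * (starRingEnd ℂ) (ν k₂)
            + (β' : ℂ) * μ i₂ * ν k₁)) *
          (⟪e i₃, U (f k₂)⟫_ℂ * ⟪f k₂, (adjoint U) (e i₂)⟫_ℂ *
           ⟪e i₂, U (f k₁)⟫_ℂ * ⟪f k₁, ρ ((adjoint U) (e i₃))⟫_ℂ)) :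
    deriv (fun β : ℝ => deriv (fun β' : ℝ => F β β') 0) 0
      = LinearMap.trace ℂ H
          ((ρ ∘L adjoint (adjoint U ∘L W ∘L U) ∘L adjoint V ∘L
            (adjoint U ∘L W ∘L U) ∘L V).toLinearMap) := by
  have hF_prod (β β' : ℝ) : F β β' = ∑ x : I × I × K × K,
      Complex.exp (-(β * ((starRingEnd ℂ) (μ x.2.1) * (starRingEnd ℂ) (ν x.2.2.2))
        + β' * (μ x.1 * ν x.2.2.1))) * combinedAmplitude U ρ e f x.1 x.2.1 x.2.2.1 x.2.2.2 := by
    simp only [hF, Fintype.sum_prod_type, mul_assoc, combinedAmplitude]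
  simp_rw [hF_prod, deriv_deriv_sum_cexp_neg_at_zero,
    trace_otoc_eq_sum_combinedAmplitude U W V ρ e f hWe hVf, Fintype.sum_prod_type]

/-- **Jarzynski-like equality for the out-of-time-ordered correlator.**
The mixed partial derivative `∂²/∂β∂β'` of
`F(β,β') = ⟨exp(−(βW + β'W'))⟩ = ∑ exp(−(β·conj(μ i₃)·conj(ν k₂) + β'·μ i₂·ν k₁)) · Ã_ρ`
evaluated at `β = β' = 0` equals the OTOC `Tr(ρ ∘ W(t)† ∘ V† ∘ W(t) ∘ V)`,
where `W(t) = U† ∘ W ∘ U`. -/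
theorem jarzynski_like_equality_for_OTOC
    {H : Type*} [NormedAddCommGroup H] [InnerProductSpace ℂ H] [FiniteDimensional ℂ H]
    {I K : Type*} [Fintype I] [Fintype K]
    (U W V ρ : H →L[ℂ] H)
    (hU : U ∈ unitary (H →L[ℂ] H))
    (hW : W ∈ unitary (H →L[ℂ] H))
    (hV : V ∈ unitary (H →L[ℂ] H))
    (e : OrthonormalBasis I ℂ H) (f : OrthonormalBasis K ℂ H)
    (μ : I → ℂ) (ν : K → ℂ)
    (hWe : ∀ i, W (e i) = μ i • e i)
    (hVf : ∀ k, V (f k) = ν k • f k)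
    (hρpos : ρ.IsPositive)
    (hρtr : LinearMap.trace ℂ H ρ.toLinearMap = 1)
    (F : ℝ → ℝ → ℂ)
    (hF : ∀ β β' : ℝ,
      F β β' = ∑ i₂ : I, ∑ i₃ : I, ∑ k₁ : K, ∑ k₂ : K,
        Complex.exp (-((β : ℂ) * (starRingEnd ℂ) (μ i₃) * (starRingEnd ℂ) (ν k₂)
            + (β' : ℂ) * μ i₂ * ν k₁)) *
          (⟪e i₃, U (f k₂)⟫_ℂ * ⟪f k₂, (adjoint U) (e i₂)⟫_ℂ *
           ⟪e i₂, U (f k₁)⟫_ℂ * ⟪f k₁, ρ ((adjoint U) (e i₃))⟫_ℂ)) :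
    deriv (fun β : ℝ => deriv (fun β' : ℝ => F β β') 0) 0
      = LinearMap.trace ℂ H
          ((ρ ∘L adjoint (adjoint U ∘L W ∘L U) ∘L adjoint V ∘L
            (adjoint U ∘L W ∘L U) ∘L V).toLinearMap) :=
  jarzynski_like_equality_for_OTOC_general U W V ρ e f μ ν hWe hVf F hF
end

section
/- Let H be a finite-dimensional complex inner product space, let U, W, V be unitary operators on H, let {e_i} be an orthonormal eigenbasis of W with eigenvalues μ_i and {f_k} an orthonormal eigenbasis of V with eigenvalues ν_k, and let ρ be a density operator on H. Then the first mixed moment of the combined quantum amplitudes equals the out-of-time-ordered correlator: Σ_{i₂,i₃,k₁,k₂} conj(μ_{i₃}) · conj(ν_{k₂}) · μ_{i₂} · ν_{k₁} · Ã_ρ(i₂,i₃,k₁,k₂) = Tr(ρ ∘ W(t)† ∘ V† ∘ W(t) ∘ V), where W(t) := U† ∘ W ∘ U. -/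
open scoped InnerProductSpace
open ContinuousLinearMap

/-!
Weighting the resolution of the identity `∑ₖ ⟪x, A fₖ⟫⟪fₖ, y⟫ = ⟪x, A y⟫` by the eigenvalues
`νₖ` (resp. `conj νₖ`) of `V` inserts `V` (resp. `V†`) between `A` and `y`. Applying this to the
sums over `k₁` and `k₂`, then over `i₂` with `W`, leaves `∑ conj μᵢ ⟪eᵢ, C eᵢ⟫ = Tr (W† C)`,
and cyclicity of the trace moves `ρ` to the front.
-/

section Eigenbasis

variable {𝕜 E ι : Type*} [RCLike 𝕜] [NormedAddCommGroup E] [InnerProductSpace 𝕜 E] [Fintype ι]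

theorem ContinuousLinearMap.inner_adjoint_apply_of_apply_eq_smul [CompleteSpace E]
    (T : E →L[𝕜] E) {v : E} {c : 𝕜} (hv : T v = c • v) (z : E) :
    ⟪v, adjoint T z⟫_𝕜 = starRingEnd 𝕜 c * ⟪v, z⟫_𝕜 := by
  rw [adjoint_inner_right, hv, inner_smul_left]

namespace OrthonormalBasis

theorem sum_inner_apply_mul_inner (b : OrthonormalBasis ι 𝕜 E) (A : E →L[𝕜] E) (x y : E) :
    ∑ i, ⟪x, A (b i)⟫_𝕜 * ⟪b i, y⟫_𝕜 = ⟪x, A y⟫_𝕜 := by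
  conv_rhs => rw [← b.sum_repr' y]
  simp [inner_sum, inner_smul_right, mul_comm]

theorem sum_eigenvalue_mul_inner_apply_mul_inner (b : OrthonormalBasis ι 𝕜 E)
    {T : E →L[𝕜] E} {c : ι → 𝕜} (hT : ∀ i, T (b i) = c i • b i) (A : E →L[𝕜] E) (x y : E) :
    ∑ i, c i * (⟪x, A (b i)⟫_𝕜 * ⟪b i, y⟫_𝕜) = ⟪x, A (T y)⟫_𝕜 := by
  rw [← ContinuousLinearMap.comp_apply, ← b.sum_inner_apply_mul_inner]
  simp [hT, inner_smul_right, mul_assoc]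

theorem sum_conj_eigenvalue_mul_inner_apply_mul_inner [CompleteSpace E]
    (b : OrthonormalBasis ι 𝕜 E) {T : E →L[𝕜] E} {c : ι → 𝕜} (hT : ∀ i, T (b i) = c i • b i)
    (A : E →L[𝕜] E) (x y : E) :
    ∑ i, starRingEnd 𝕜 (c i) * (⟪x, A (b i)⟫_𝕜 * ⟪b i, y⟫_𝕜) = ⟪x, A (adjoint T y)⟫_𝕜 := by
  rw [← b.sum_inner_apply_mul_inner]
  refine Finset.sum_congr rfl fun i _ => ?_
  rw [T.inner_adjoint_apply_of_apply_eq_smul (hT i)]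
  ring

theorem sum_conj_eigenvalue_mul_inner_eq_trace_adjoint_comp [CompleteSpace E]
    (b : OrthonormalBasis ι 𝕜 E) {T : E →L[𝕜] E} {c : ι → 𝕜} (hT : ∀ i, T (b i) = c i • b i)
    (C : E →L[𝕜] E) :
    ∑ i, starRingEnd 𝕜 (c i) * ⟪b i, C (b i)⟫_𝕜 =
      LinearMap.trace 𝕜 E (adjoint T ∘L C).toLinearMap := by
  simp [LinearMap.trace_eq_sum_inner _ b, T.inner_adjoint_apply_of_apply_eq_smul (hT _)]

end OrthonormalBasis

end Eigenbasis

theorem otoc_first_mixed_moment_general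
    {H : Type*} [NormedAddCommGroup H] [InnerProductSpace ℂ H] [FiniteDimensional ℂ H]
    {I K : Type*} [Fintype I] [Fintype K]
    (U W V ρ : H →L[ℂ] H)
    (e : OrthonormalBasis I ℂ H) (f : OrthonormalBasis K ℂ H)
    (μ : I → ℂ) (ν : K → ℂ)
    (hWe : ∀ i, W (e i) = μ i • e i)
    (hVf : ∀ k, V (f k) = ν k • f k) :
    ∑ i₂ : I, ∑ i₃ : I, ∑ k₁ : K, ∑ k₂ : K,
      (starRingEnd ℂ) (μ i₃) * (starRingEnd ℂ) (ν k₂) * μ i₂ * ν k₁ *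
        (⟪e i₃, U (f k₂)⟫_ℂ * ⟪f k₂, (adjoint U) (e i₂)⟫_ℂ *
         ⟪e i₂, U (f k₁)⟫_ℂ * ⟪f k₁, ρ ((adjoint U) (e i₃))⟫_ℂ)
      = LinearMap.trace ℂ H
          ((ρ ∘L adjoint (adjoint U ∘L W ∘L U) ∘L adjoint V ∘L
            (adjoint U ∘L W ∘L U) ∘L V).toLinearMap) := by
  set A := U ∘L adjoint V ∘L adjoint U
  set B := U ∘L V ∘L ρ ∘L adjoint U
  calc _ = ∑ i₂, ∑ i₃, starRingEnd ℂ (μ i₃) * μ i₂ *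
          ⟪e i₃, U (adjoint V (adjoint U (e i₂)))⟫_ℂ * ⟪e i₂, U (V (ρ (adjoint U (e i₃))))⟫_ℂ := by
        simp_rw [← f.sum_eigenvalue_mul_inner_apply_mul_inner hVf U,
          ← f.sum_conj_eigenvalue_mul_inner_apply_mul_inner hVf U,
          Finset.mul_sum, Finset.sum_mul]
        refine Finset.sum_congr rfl fun i₂ _ => Finset.sum_congr rfl fun i₃ _ =>
          Finset.sum_congr rfl fun k₁ _ => Finset.sum_congr rfl fun k₂ _ => ?_
        ring
    _ = ∑ i₃, starRingEnd ℂ (μ i₃) * ∑ i₂, μ i₂ * (⟪e i₃, A (e i₂)⟫_ℂ * ⟪e i₂, B (e i₃)⟫_ℂ) := by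
        rw [Finset.sum_comm]
        simp only [Finset.mul_sum]
        refine Finset.sum_congr rfl fun i₃ _ => Finset.sum_congr rfl fun i₂ _ => ?_
        simp only [A, B, ContinuousLinearMap.comp_apply]
        ring
    _ = ∑ i₃, starRingEnd ℂ (μ i₃) * ⟪e i₃, (A ∘L W ∘L B) (e i₃)⟫_ℂ := by
        simp only [e.sum_eigenvalue_mul_inner_apply_mul_inner hWe A]
        rfl
    _ = LinearMap.trace ℂ H ((adjoint W ∘L A ∘L W ∘L B).toLinearMap) :=
        e.sum_conj_eigenvalue_mul_inner_eq_trace_adjoint_comp hWe _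
    _ = LinearMap.trace ℂ H ((ρ ∘L adjoint U) ∘L (adjoint W ∘L U ∘L adjoint V ∘L
          adjoint U ∘L W ∘L U ∘L V)).toLinearMap :=
        (LinearMap.trace_comp_comm' (adjoint W ∘L U ∘L adjoint V ∘L
          adjoint U ∘L W ∘L U ∘L V).toLinearMap (ρ ∘L adjoint U).toLinearMap).symm
    _ = _ := by
        simp only [adjoint_comp, adjoint_adjoint, comp_assoc]

/-- **First mixed moment of the combined quantum amplitudes equals the OTOC.**
The sum `∑ conj(μ i₃) * conj(ν k₂) * μ i₂ * ν k₁ * Ã_ρ(i₂,i₃,k₁,k₂)` equals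
`Tr(ρ ∘ W(t)† ∘ V† ∘ W(t) ∘ V)` where `W(t) = U† ∘ W ∘ U`. -/
theorem otoc_first_mixed_moment
    {H : Type*} [NormedAddCommGroup H] [InnerProductSpace ℂ H] [FiniteDimensional ℂ H]
    {I K : Type*} [Fintype I] [Fintype K]
    (U W V ρ : H →L[ℂ] H)
    (hU : U ∈ unitary (H →L[ℂ] H))
    (hW : W ∈ unitary (H →L[ℂ] H))
    (hV : V ∈ unitary (H →L[ℂ] H))
    (e : OrthonormalBasis I ℂ H) (f : OrthonormalBasis K ℂ H)
    (μ : I → ℂ) (ν : K → ℂ)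
    (hWe : ∀ i, W (e i) = μ i • e i)
    (hVf : ∀ k, V (f k) = ν k • f k)
    (hρpos : ρ.IsPositive)
    (hρtr : LinearMap.trace ℂ H ρ.toLinearMap = 1) :
    ∑ i₂ : I, ∑ i₃ : I, ∑ k₁ : K, ∑ k₂ : K,
      (starRingEnd ℂ) (μ i₃) * (starRingEnd ℂ) (ν k₂) * μ i₂ * ν k₁ *
        (⟪e i₃, U (f k₂)⟫_ℂ * ⟪f k₂, (adjoint U) (e i₂)⟫_ℂ *
         ⟪e i₂, U (f k₁)⟫_ℂ * ⟪f k₁, ρ ((adjoint U) (e i₃))⟫_ℂ)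
      = LinearMap.trace ℂ H
          ((ρ ∘L adjoint (adjoint U ∘L W ∘L U) ∘L adjoint V ∘L
            (adjoint U ∘L W ∘L U) ∘L V).toLinearMap) :=
  otoc_first_mixed_moment_general U W V ρ e f μ ν hWe hVf
end

section
/- Let H be a finite-dimensional complex inner product space, let U, W, V be unitary operators on H, let {e_i} be an orthonormal eigenbasis of W and {f_k} an orthonormal eigenbasis of V, and let ρ be a density operator on H. Then for every fixed index i₂, marginalizing the combined quantum amplitude over all other indices yields a probability: Σ_{i₃,k₁,k₂} Ã_ρ(i₂,i₃,k₁,k₂) = ⟨e_{i₂}, (U ∘ ρ ∘ U†) e_{i₂}⟩, which is a real number lying in the interval [0, 1]. -/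
/-!
The sums over `k₂`, `k₁` and `i₃` are three insertions of a resolution of the identity
`∑ |b_j⟩⟨b_j| = 1`; they collapse the marginal to `⟪e i₂, U ρ U† U U† e i₂⟫ = ⟪e i₂, U ρ U† e i₂⟫`.
That number is a diagonal entry of the positive operator `U ρ U†`, hence real, nonnegative and at
most its trace, which equals `tr ρ = 1`.
-/

open scoped InnerProductSpace
open ContinuousLinearMap

section

variable {𝕜 E ι : Type*} [RCLike 𝕜] [NormedAddCommGroup E] [InnerProductSpace 𝕜 E] [Fintype ι]

theorem OrthonormalBasis.sum_inner_map_mul_inner [CompleteSpace E] (b : OrthonormalBasis ι 𝕜 E)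
    (T : E →L[𝕜] E) (x y : E) : ∑ i, ⟪x, T (b i)⟫_𝕜 * ⟪b i, y⟫_𝕜 = ⟪x, T y⟫_𝕜 := by
  simpa only [adjoint_inner_left] using b.sum_inner_mul_inner (adjoint T x) y

theorem ContinuousLinearMap.IsPositive.re_inner_le_re_trace {T : E →L[𝕜] E} (hT : T.IsPositive)
    (b : OrthonormalBasis ι 𝕜 E) (i : ι) :
    RCLike.re ⟪b i, T (b i)⟫_𝕜 ≤ RCLike.re (LinearMap.trace 𝕜 E T.toLinearMap) := by
  rw [LinearMap.trace_eq_sum_inner _ b, map_sum]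
  exact Finset.single_le_sum (fun j _ => hT.re_inner_nonneg_right (b j)) (Finset.mem_univ i)

theorem ContinuousLinearMap.trace_conj_of_mem_unitary [CompleteSpace E] [FiniteDimensional 𝕜 E]
    {U : E →L[𝕜] E} (hU : U ∈ unitary (E →L[𝕜] E)) (T : E →L[𝕜] E) :
    LinearMap.trace 𝕜 E (U ∘L T ∘L adjoint U).toLinearMap = LinearMap.trace 𝕜 E T.toLinearMap := by
  have h : (adjoint U ∘L U).toLinearMap = LinearMap.id := by
    rw [← star_eq_adjoint, ← mul_def, Unitary.star_mul_self_of_mem hU, one_def, coe_id]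
  rw [toLinearMap_comp, toLinearMap_comp, LinearMap.trace_comp_comm', LinearMap.comp_assoc,
    ← toLinearMap_comp, h, LinearMap.comp_id]

theorem OrthonormalBasis.sum_inner_mul_inner_mul_inner_mul_inner [CompleteSpace E] {κ : Type*}
    [Fintype κ] (e : OrthonormalBasis ι 𝕜 E) (f : OrthonormalBasis κ 𝕜 E) (A B C : E →L[𝕜] E)
    (x y : E) :
    ∑ i, ∑ k, ∑ l, ⟪e i, A (f l)⟫_𝕜 * ⟪f l, x⟫_𝕜 * ⟪y, B (f k)⟫_𝕜 * ⟪f k, C (e i)⟫_𝕜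
      = ⟪y, (B ∘L C ∘L A) x⟫_𝕜 := by
  have factor : ∀ i, ∑ k, ∑ l, ⟪e i, A (f l)⟫_𝕜 * ⟪f l, x⟫_𝕜 * ⟪y, B (f k)⟫_𝕜 * ⟪f k, C (e i)⟫_𝕜
      = ⟪y, (B ∘L C) (e i)⟫_𝕜 * ⟪e i, A x⟫_𝕜 := by
    intro i
    calc _ = (∑ k, ⟪y, B (f k)⟫_𝕜 * ⟪f k, C (e i)⟫_𝕜) * ∑ l, ⟪e i, A (f l)⟫_𝕜 * ⟪f l, x⟫_𝕜 := by
          rw [Finset.sum_mul_sum]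
          exact Fintype.sum_congr _ _ fun k => Fintype.sum_congr _ _ fun l => by ring
      _ = _ := by rw [f.sum_inner_map_mul_inner, f.sum_inner_map_mul_inner, comp_apply]
  simp_rw [factor, e.sum_inner_map_mul_inner, comp_apply]

end

theorem combined_amplitude_marginal_i₂_general
    {H : Type*} [NormedAddCommGroup H] [InnerProductSpace ℂ H] [FiniteDimensional ℂ H]
    {I K : Type*} [Fintype I] [Fintype K]
    (U ρ : H →L[ℂ] H)
    (hU : U ∈ unitary (H →L[ℂ] H))
    (e : OrthonormalBasis I ℂ H) (f : OrthonormalBasis K ℂ H)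
    (hρpos : ρ.IsPositive)
    (hρtr : LinearMap.trace ℂ H ρ.toLinearMap = 1)
    (i₂ : I) :
    (∑ i₃ : I, ∑ k₁ : K, ∑ k₂ : K,
      ⟪e i₃, U (f k₂)⟫_ℂ * ⟪f k₂, (adjoint U) (e i₂)⟫_ℂ *
        ⟪e i₂, U (f k₁)⟫_ℂ * ⟪f k₁, ρ ((adjoint U) (e i₃))⟫_ℂ
      = ⟪e i₂, (U ∘L ρ ∘L adjoint U) (e i₂)⟫_ℂ)
    ∧ (⟪e i₂, (U ∘L ρ ∘L adjoint U) (e i₂)⟫_ℂ).im = 0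
    ∧ (⟪e i₂, (U ∘L ρ ∘L adjoint U) (e i₂)⟫_ℂ).re ∈ Set.Icc (0 : ℝ) 1 := by
  have hUU : U ∘L adjoint U = .id ℂ H := by
    rw [← star_eq_adjoint, ← mul_def, Unitary.mul_star_self_of_mem hU, one_def]
  have hT : (U ∘L ρ ∘L adjoint U).IsPositive := hρpos.conj_adjoint U
  have hT_trace : LinearMap.trace ℂ H (U ∘L ρ ∘L adjoint U).toLinearMap = 1 := by
    rw [trace_conj_of_mem_unitary hU, hρtr]
  refine ⟨?_, (Complex.le_def.mp (hT.inner_nonneg_right (e i₂))).2.symm,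
    hT.re_inner_nonneg_right (e i₂), ?_⟩
  · calc _ = ⟪e i₂, (U ∘L (ρ ∘L adjoint U) ∘L U) (adjoint U (e i₂))⟫_ℂ :=
          e.sum_inner_mul_inner_mul_inner_mul_inner f U U (ρ ∘L adjoint U) _ _
      _ = _ := by simp only [comp_apply, ← comp_apply U (adjoint U), hUU, id_apply]
  · exact (hT.re_inner_le_re_trace e i₂).trans_eq (by rw [hT_trace]; rfl)

/-- **Marginalizing `Ã_ρ` over all indices except `i₂` yields a probability:**
`∑_{i₃,k₁,k₂} Ã_ρ(i₂,i₃,k₁,k₂) = ⟨e_{i₂}, (U ∘ ρ ∘ U†) e_{i₂}⟩`,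
a real number in `[0,1]`. -/
theorem combined_amplitude_marginal_i₂
    {H : Type*} [NormedAddCommGroup H] [InnerProductSpace ℂ H] [FiniteDimensional ℂ H]
    {I K : Type*} [Fintype I] [Fintype K]
    (U W V ρ : H →L[ℂ] H)
    (hU : U ∈ unitary (H →L[ℂ] H))
    (hW : W ∈ unitary (H →L[ℂ] H))
    (hV : V ∈ unitary (H →L[ℂ] H))
    (e : OrthonormalBasis I ℂ H) (f : OrthonormalBasis K ℂ H)
    (hWe : ∀ i, ∃ c : ℂ, W (e i) = c • e i)
    (hVf : ∀ k, ∃ c : ℂ, V (f k) = c • f k)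
    (hρpos : ρ.IsPositive)
    (hρtr : LinearMap.trace ℂ H ρ.toLinearMap = 1)
    (i₂ : I) :
    (∑ i₃ : I, ∑ k₁ : K, ∑ k₂ : K,
      ⟪e i₃, U (f k₂)⟫_ℂ * ⟪f k₂, (adjoint U) (e i₂)⟫_ℂ *
        ⟪e i₂, U (f k₁)⟫_ℂ * ⟪f k₁, ρ ((adjoint U) (e i₃))⟫_ℂ
      = ⟪e i₂, (U ∘L ρ ∘L adjoint U) (e i₂)⟫_ℂ)
    ∧ (⟪e i₂, (U ∘L ρ ∘L adjoint U) (e i₂)⟫_ℂ).im = 0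
    ∧ (⟪e i₂, (U ∘L ρ ∘L adjoint U) (e i₂)⟫_ℂ).re ∈ Set.Icc (0 : ℝ) 1 :=
  combined_amplitude_marginal_i₂_general U ρ hU e f hρpos hρtr i₂
end

section
/- Let H be a finite-dimensional complex inner product space, let U, W, V be unitary operators on H, let {e_i} be an orthonormal eigenbasis of W and {f_k} an orthonormal eigenbasis of V, and let ρ be a density operator on H. Then for every fixed index i₃, marginalizing the combined quantum amplitude over all other indices yields a probability: Σ_{i₂,k₁,k₂} Ã_ρ(i₂,i₃,k₁,k₂) = ⟨e_{i₃}, (U ∘ ρ ∘ U†) e_{i₃}⟩, which is a real number lying in the interval [0, 1]. -/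
/-!
Inserting the resolutions of the identity `∑ₖ |f k⟩⟨f k|` and `∑ᵢ |e i⟩⟨e i|` collapses the
marginal to `⟪e i₃, U U† U ρ U† e i₃⟫ = ⟪e i₃, σ e i₃⟫` with `σ = U ρ U†`. Conjugation by a
unitary preserves positivity and trace, so `σ` is again a density operator, and a diagonal entry
of a positive operator lies between `0` and the trace in the order `ComplexOrder` on `ℂ`, where
`0 ≤ z` means `z` is real and nonnegative.
-/

open scoped InnerProductSpace ComplexOrder
open ContinuousLinearMap

namespace OrthonormalBasis

variable {𝕜 E F ι κ : Type*} [RCLike 𝕜] [NormedAddCommGroup E] [InnerProductSpace 𝕜 E]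
  [NormedAddCommGroup F] [InnerProductSpace 𝕜 F] [Fintype ι] [Fintype κ]

theorem sum_inner_map_mul_inner_s5 (b : OrthonormalBasis ι 𝕜 E) (A : E →L[𝕜] F) (x : F) (y : E) :
    ∑ i, ⟪x, A (b i)⟫_𝕜 * ⟪b i, y⟫_𝕜 = ⟪x, A y⟫_𝕜 := by
  conv_rhs => rw [← b.sum_repr' y]
  simp only [map_sum, map_smul, inner_sum, inner_smul_right, mul_comm]

theorem sum_sum_sum_inner_mul_inner {G : Type*} [NormedAddCommGroup G] [InnerProductSpace 𝕜 G]
    (e : OrthonormalBasis ι 𝕜 E) (f : OrthonormalBasis κ 𝕜 F)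
    (A : F →L[𝕜] G) (B : E →L[𝕜] F) (C : F →L[𝕜] E) (x : G) (y : F) :
    ∑ i, ∑ k₁, ∑ k₂, ⟪x, A (f k₂)⟫_𝕜 * ⟪f k₂, B (e i)⟫_𝕜 * ⟪e i, C (f k₁)⟫_𝕜 * ⟪f k₁, y⟫_𝕜
      = ⟪x, (A ∘L B ∘L C) y⟫_𝕜 := by
  calc _ = ∑ i, (∑ k₂, ⟪x, A (f k₂)⟫_𝕜 * ⟪f k₂, B (e i)⟫_𝕜) *
          ∑ k₁, ⟪e i, C (f k₁)⟫_𝕜 * ⟪f k₁, y⟫_𝕜 := by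
        simp only [Finset.sum_mul_sum, mul_assoc]
        exact Finset.sum_congr rfl fun _ _ => Finset.sum_comm
    _ = ∑ i, ⟪x, (A ∘L B) (e i)⟫_𝕜 * ⟪e i, C y⟫_𝕜 := by
        simp only [sum_inner_map_mul_inner_s5, comp_apply]
    _ = ⟪x, (A ∘L B ∘L C) y⟫_𝕜 := by
        rw [e.sum_inner_map_mul_inner_s5]; rfl

end OrthonormalBasis

theorem LinearMap.IsPositive.inner_le_trace {𝕜 E ι : Type*} [RCLike 𝕜] [NormedAddCommGroup E]
    [InnerProductSpace 𝕜 E] [Fintype ι] {T : E →ₗ[𝕜] E} (hT : T.IsPositive)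
    (b : OrthonormalBasis ι 𝕜 E) (i : ι) :
    ⟪b i, T (b i)⟫_𝕜 ≤ LinearMap.trace 𝕜 E T := by
  rw [T.trace_eq_sum_inner b]
  exact Finset.single_le_sum (fun j _ => hT.inner_nonneg_right (b j)) (Finset.mem_univ i)

theorem ContinuousLinearMap.trace_conj_unitary {𝕜 E : Type*} [RCLike 𝕜] [NormedAddCommGroup E]
    [InnerProductSpace 𝕜 E] [CompleteSpace E] [FiniteDimensional 𝕜 E] {U : E →L[𝕜] E}
    (hU : U ∈ unitary (E →L[𝕜] E)) (T : E →L[𝕜] E) :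
    LinearMap.trace 𝕜 E (U ∘L T ∘L adjoint U).toLinearMap = LinearMap.trace 𝕜 E T.toLinearMap := by
  rw [← star_eq_adjoint, toLinearMap_comp, LinearMap.trace_comp_comm', ← toLinearMap_comp,
    comp_assoc, ← mul_def (star U), hU.1, one_def, comp_id]

theorem combined_amplitude_marginal_i₃_general
    {H : Type*} [NormedAddCommGroup H] [InnerProductSpace ℂ H] [FiniteDimensional ℂ H]
    {I K : Type*} [Fintype I] [Fintype K]
    (U ρ : H →L[ℂ] H)
    (hU : U ∈ unitary (H →L[ℂ] H))
    (e : OrthonormalBasis I ℂ H) (f : OrthonormalBasis K ℂ H)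
    (hρpos : ρ.IsPositive)
    (hρtr : LinearMap.trace ℂ H ρ.toLinearMap = 1)
    (i₃ : I) :
    (∑ i₂ : I, ∑ k₁ : K, ∑ k₂ : K,
      ⟪e i₃, U (f k₂)⟫_ℂ * ⟪f k₂, (adjoint U) (e i₂)⟫_ℂ *
        ⟪e i₂, U (f k₁)⟫_ℂ * ⟪f k₁, ρ ((adjoint U) (e i₃))⟫_ℂ
      = ⟪e i₃, (U ∘L ρ ∘L adjoint U) (e i₃)⟫_ℂ)
    ∧ (⟪e i₃, (U ∘L ρ ∘L adjoint U) (e i₃)⟫_ℂ).im = 0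
    ∧ (⟪e i₃, (U ∘L ρ ∘L adjoint U) (e i₃)⟫_ℂ).re ∈ Set.Icc (0 : ℝ) 1 := by
  have hUU : U ∘L adjoint U ∘L U = U := by
    rw [← star_eq_adjoint, ← comp_assoc, ← mul_def U, hU.2, one_def, id_comp]
  have hσ : (U ∘L ρ ∘L adjoint U).IsPositive := hρpos.conj_adjoint U
  have hσ_nonneg := hσ.inner_nonneg_right (e i₃)
  have hσ_le_one := hσ.toLinearMap.inner_le_trace e i₃
  rw [trace_conj_unitary hU, hρtr] at hσ_le_one
  refine ⟨?_, (Complex.nonneg_iff.mp hσ_nonneg).2.symm, (Complex.le_def.mp hσ_nonneg).1, ?_⟩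
  · rw [e.sum_sum_sum_inner_mul_inner f, ← comp_apply (U ∘L adjoint U ∘L U), hUU]
    rfl
  · simpa using (Complex.le_def.mp hσ_le_one).1

/-- **Marginalizing `Ã_ρ` over all indices except `i₃` yields a probability:**
`∑_{i₂,k₁,k₂} Ã_ρ(i₂,i₃,k₁,k₂) = ⟨e_{i₃}, (U ∘ ρ ∘ U†) e_{i₃}⟩`,
a real number in `[0,1]`. -/
theorem combined_amplitude_marginal_i₃
    {H : Type*} [NormedAddCommGroup H] [InnerProductSpace ℂ H] [FiniteDimensional ℂ H]
    {I K : Type*} [Fintype I] [Fintype K]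
    (U W V ρ : H →L[ℂ] H)
    (hU : U ∈ unitary (H →L[ℂ] H))
    (hW : W ∈ unitary (H →L[ℂ] H))
    (hV : V ∈ unitary (H →L[ℂ] H))
    (e : OrthonormalBasis I ℂ H) (f : OrthonormalBasis K ℂ H)
    (hWe : ∀ i, ∃ c : ℂ, W (e i) = c • e i)
    (hVf : ∀ k, ∃ c : ℂ, V (f k) = c • f k)
    (hρpos : ρ.IsPositive)
    (hρtr : LinearMap.trace ℂ H ρ.toLinearMap = 1)
    (i₃ : I) :
    (∑ i₂ : I, ∑ k₁ : K, ∑ k₂ : K,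
      ⟪e i₃, U (f k₂)⟫_ℂ * ⟪f k₂, (adjoint U) (e i₂)⟫_ℂ *
        ⟪e i₂, U (f k₁)⟫_ℂ * ⟪f k₁, ρ ((adjoint U) (e i₃))⟫_ℂ
      = ⟪e i₃, (U ∘L ρ ∘L adjoint U) (e i₃)⟫_ℂ)
    ∧ (⟪e i₃, (U ∘L ρ ∘L adjoint U) (e i₃)⟫_ℂ).im = 0
    ∧ (⟪e i₃, (U ∘L ρ ∘L adjoint U) (e i₃)⟫_ℂ).re ∈ Set.Icc (0 : ℝ) 1 :=
  combined_amplitude_marginal_i₃_general U ρ hU e f hρpos hρtr i₃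
end

section
/- Let H be a finite-dimensional complex inner product space, let U, W, V be unitary operators on H, let {e_i} be an orthonormal eigenbasis of W and {f_k} an orthonormal eigenbasis of V, and suppose the density operator ρ satisfies ρ (U† e_i) = q_i • (U† e_i) for every i, with q_i ≥ 0 and Σ_i q_i = 1. Then, when the two W-indices coincide (i₃ = i₂), the combined quantum amplitude reduces to a product of probabilities: Ã_ρ(i₂,i₂,k₁,k₂) = |⟨f_{k₂}, U† e_{i₂}⟩|² · |⟨f_{k₁}, U† e_{i₂}⟩|² · q_{i₂}. In particular, Ã_ρ(i₂,i₂,k₁,k₂) is a nonnegative real number. -/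
open scoped InnerProductSpace
open ContinuousLinearMap

section Amplitude

variable {𝕜 E F : Type*} [RCLike 𝕜]
  [NormedAddCommGroup E] [InnerProductSpace 𝕜 E] [CompleteSpace E]
  [NormedAddCommGroup F] [InnerProductSpace 𝕜 F] [CompleteSpace F]

theorem inner_apply_mul_inner_adjoint_apply (A : E →L[𝕜] F) (x : F) (y : E) :
    ⟪x, A y⟫_𝕜 * ⟪y, (adjoint A) x⟫_𝕜 = ((‖⟪y, (adjoint A) x⟫_𝕜‖ ^ 2 : ℝ) : 𝕜) := by
  rw [← adjoint_inner_left, ← inner_conj_symm, RCLike.conj_mul, RCLike.ofReal_pow]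

theorem inner_mul_inner_mul_inner_mul_inner_of_apply_adjoint_eq_smul
    (A : E →L[𝕜] F) (ρ : E →L[𝕜] E) (x : F) (y z : E) (q : ℝ)
    (hρ : ρ ((adjoint A) x) = (q : 𝕜) • (adjoint A) x) :
    ⟪x, A y⟫_𝕜 * ⟪y, (adjoint A) x⟫_𝕜 * ⟪x, A z⟫_𝕜 * ⟪z, ρ ((adjoint A) x)⟫_𝕜
      = ((‖⟪y, (adjoint A) x⟫_𝕜‖ ^ 2 * ‖⟪z, (adjoint A) x⟫_𝕜‖ ^ 2 * q : ℝ) : 𝕜) := by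
  rw [hρ, inner_smul_right]
  calc ⟪x, A y⟫_𝕜 * ⟪y, (adjoint A) x⟫_𝕜 * ⟪x, A z⟫_𝕜 * ((q : 𝕜) * ⟪z, (adjoint A) x⟫_𝕜)
      = (⟪x, A y⟫_𝕜 * ⟪y, (adjoint A) x⟫_𝕜) * (⟪x, A z⟫_𝕜 * ⟪z, (adjoint A) x⟫_𝕜) * q := by
        ring
    _ = _ := by
        rw [inner_apply_mul_inner_adjoint_apply, inner_apply_mul_inner_adjoint_apply]
        norm_cast

end Amplitude

theorem combined_amplitude_reduces_to_probability_W_general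
    {H : Type*} [NormedAddCommGroup H] [InnerProductSpace ℂ H] [FiniteDimensional ℂ H]
    {I K : Type*} [Fintype I] [Fintype K]
    (U ρ : H →L[ℂ] H)
    (e : OrthonormalBasis I ℂ H) (f : OrthonormalBasis K ℂ H)
    (q : I → ℝ) (hq : ∀ i, 0 ≤ q i)
    (hρdiag : ∀ i, ρ ((adjoint U) (e i)) = (q i : ℂ) • ((adjoint U) (e i)))
    (i₂ : I) (k₁ k₂ : K) :
    (⟪e i₂, U (f k₂)⟫_ℂ * ⟪f k₂, (adjoint U) (e i₂)⟫_ℂ *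
       ⟪e i₂, U (f k₁)⟫_ℂ * ⟪f k₁, ρ ((adjoint U) (e i₂))⟫_ℂ
      = ((‖⟪f k₂, (adjoint U) (e i₂)⟫_ℂ‖ : ℝ) ^ 2 *
         (‖⟪f k₁, (adjoint U) (e i₂)⟫_ℂ‖ : ℝ) ^ 2 * q i₂ : ℝ))
    ∧ (⟪e i₂, U (f k₂)⟫_ℂ * ⟪f k₂, (adjoint U) (e i₂)⟫_ℂ *
       ⟪e i₂, U (f k₁)⟫_ℂ * ⟪f k₁, ρ ((adjoint U) (e i₂))⟫_ℂ).im = 0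
    ∧ 0 ≤ (⟪e i₂, U (f k₂)⟫_ℂ * ⟪f k₂, (adjoint U) (e i₂)⟫_ℂ *
       ⟪e i₂, U (f k₁)⟫_ℂ * ⟪f k₁, ρ ((adjoint U) (e i₂))⟫_ℂ).re := by
  have hamp := inner_mul_inner_mul_inner_mul_inner_of_apply_adjoint_eq_smul
    U ρ (e i₂) (f k₂) (f k₁) (q i₂) (hρdiag i₂)
  refine ⟨hamp, ?_, ?_⟩
  · rw [hamp]
    exact Complex.ofReal_im _
  · rw [hamp]
    exact mul_nonneg (by positivity) (hq i₂)

/-- **Reduction of `Ã_ρ` to a product of probabilities when the `W`-indices coincide:**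
if `ρ (U† e_i) = q_i • (U† e_i)` with `q_i ≥ 0`, `∑ q_i = 1`, then
`Ã_ρ(i₂,i₂,k₁,k₂) = |⟨f_{k₂},U† e_{i₂}⟩|² |⟨f_{k₁},U† e_{i₂}⟩|² q_{i₂}`,
a nonnegative real number. -/
theorem combined_amplitude_reduces_to_probability_W
    {H : Type*} [NormedAddCommGroup H] [InnerProductSpace ℂ H] [FiniteDimensional ℂ H]
    {I K : Type*} [Fintype I] [Fintype K]
    (U W V ρ : H →L[ℂ] H)
    (hU : U ∈ unitary (H →L[ℂ] H))
    (hW : W ∈ unitary (H →L[ℂ] H))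
    (hV : V ∈ unitary (H →L[ℂ] H))
    (e : OrthonormalBasis I ℂ H) (f : OrthonormalBasis K ℂ H)
    (hWe : ∀ i, ∃ c : ℂ, W (e i) = c • e i)
    (hVf : ∀ k, ∃ c : ℂ, V (f k) = c • f k)
    (hρpos : ρ.IsPositive)
    (hρtr : LinearMap.trace ℂ H ρ.toLinearMap = 1)
    (q : I → ℝ) (hq : ∀ i, 0 ≤ q i) (hqsum : ∑ i : I, q i = 1)
    (hρdiag : ∀ i, ρ ((adjoint U) (e i)) = (q i : ℂ) • ((adjoint U) (e i)))
    (i₂ : I) (k₁ k₂ : K) :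
    (⟪e i₂, U (f k₂)⟫_ℂ * ⟪f k₂, (adjoint U) (e i₂)⟫_ℂ *
       ⟪e i₂, U (f k₁)⟫_ℂ * ⟪f k₁, ρ ((adjoint U) (e i₂))⟫_ℂ
      = ((‖⟪f k₂, (adjoint U) (e i₂)⟫_ℂ‖ : ℝ) ^ 2 *
         (‖⟪f k₁, (adjoint U) (e i₂)⟫_ℂ‖ : ℝ) ^ 2 * q i₂ : ℝ))
    ∧ (⟪e i₂, U (f k₂)⟫_ℂ * ⟪f k₂, (adjoint U) (e i₂)⟫_ℂ *
       ⟪e i₂, U (f k₁)⟫_ℂ * ⟪f k₁, ρ ((adjoint U) (e i₂))⟫_ℂ).im = 0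
    ∧ 0 ≤ (⟪e i₂, U (f k₂)⟫_ℂ * ⟪f k₂, (adjoint U) (e i₂)⟫_ℂ *
       ⟪e i₂, U (f k₁)⟫_ℂ * ⟪f k₁, ρ ((adjoint U) (e i₂))⟫_ℂ).re :=
  combined_amplitude_reduces_to_probability_W_general U ρ e f q hq hρdiag i₂ k₁ k₂
end
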